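/- Define the sequence γ = {τ_k}_{k=1}^∞ by τ_1 = 1 and τ_k = k + Σ_{ℓ=2}^k (1/ℓ) for k ≥ 2. Then γ is an impulse-time sequence, γ belongs to Sdn(1), but γ does not belong to Srad(n,1) for any n ∈ ℕ. -/

import Mathlib

/-!
The gaps of the sequence are `1 + 1/(k+2)`, so `gammaSeq k = k + H_{k+1}` with `H` the harmonic
numbers. Since `H_{a+m} - H_a ≤ H_m ≤ 1 + log m`, any `m + 1` consecutive impulses span a length
of at most `m + 1 + log m`, so every window `(s, s + t]` contains at least `t - 3 - log t`
impulses and the frequency is asymptotically at least `1`. On the other hand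
`(0, gammaSeq K]` contains exactly `K + 1` impulses while `gammaSeq K - K = H_{K+1} → ∞`.
-/

open Set Filter

noncomputable section

/-- An (infinite) impulse-time sequence: strictly increasing, positive, with no finite
limit point (i.e. tending to `∞`). -/
def IsImpSeqFun (τ : ℕ → ℝ) : Prop :=
  StrictMono τ ∧ 0 < τ 0 ∧ Filter.Tendsto τ Filter.atTop Filter.atTop

/-- `seqCnt τ s t` is the number `n^γ_{(s,t]}` of terms of the sequence `τ` lying in `(s, t]`. -/
def seqCnt (τ : ℕ → ℝ) (s t : ℝ) : ℕ := (Set.range τ ∩ Set.Ioc s t).ncard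

/-- Membership in the class `Sup(ρ)` (impulse frequency eventually uniformly upper bounded
by `ρ`), for sequences. -/
def SeqMemSup (ρ : ℝ) (τ : ℕ → ℝ) : Prop :=
  IsImpSeqFun τ ∧ ∀ ε : ℝ, 0 < ε → ∃ T : ℝ, 0 < T ∧
    ∀ t : ℝ, T ≤ t → ∀ s : ℝ, 0 ≤ s → (seqCnt τ s (s + t) : ℝ) / t ≤ ρ + ε

/-- Membership in the class `Sdn(ρ)` (impulse frequency eventually uniformly lower bounded
by `ρ`), for sequences. -/
def SeqMemSdn (ρ : ℝ) (τ : ℕ → ℝ) : Prop :=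
  IsImpSeqFun τ ∧ ∀ ε : ℝ, 0 < ε → ∃ T : ℝ, 0 < T ∧
    ∀ t : ℝ, T ≤ t → ∀ s : ℝ, 0 ≤ s → ρ - ε ≤ (seqCnt τ s (s + t) : ℝ) / t

/-- Membership in the average dwell-time class `Sad(n, τADT)`. -/
def SeqMemSad (n : ℕ) (τADT : ℝ) (τ : ℕ → ℝ) : Prop :=
  IsImpSeqFun τ ∧ ∀ s t : ℝ, 0 ≤ s → s ≤ t → (seqCnt τ s t : ℝ) ≤ (n : ℝ) + (t - s) / τADT

/-- Membership in the reverse average dwell-time class `Srad(n, τADT)`. -/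
def SeqMemSrad (n : ℕ) (τADT : ℝ) (τ : ℕ → ℝ) : Prop :=
  IsImpSeqFun τ ∧ ∀ s t : ℝ, 0 ≤ s → s ≤ t → -(n : ℝ) + (t - s) / τADT ≤ (seqCnt τ s t : ℝ)

/-- The sequence `τ_1 = 1` and `τ_k = k + Σ_{ℓ=2}^k 1/ℓ` for `k ≥ 2`
(indexed here so that `gammaSeq (k-1) = τ_k`). -/
def gammaSeq (k : ℕ) : ℝ :=
  ((k + 1 : ℕ) : ℝ) + ∑ ℓ ∈ Finset.Icc 2 (k + 1), (1 : ℝ) / (ℓ : ℝ)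

open Asymptotics

section ImpulseSequence

variable {τ : ℕ → ℝ}

lemma finite_setOf_le_of_tendsto (hτ : Tendsto τ atTop atTop) (t : ℝ) :
    {k | τ k ≤ t}.Finite := by
  have h := hτ.eventually_gt_atTop t
  rw [← Nat.cofinite_eq_atTop, eventually_cofinite] at h
  simpa only [not_lt] using h

lemma add_one_le_seqCnt (hτ : IsImpSeqFun τ) {s t : ℝ} {a m : ℕ} (hs : s < τ a)
    (ht : τ (a + m) ≤ t) : m + 1 ≤ seqCnt τ s t := by
  have hfin : (Set.range τ ∩ Ioc s t).Finite :=
    ((finite_setOf_le_of_tendsto hτ.2.2 t).image τ).subset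
      (by rintro _ ⟨⟨k, rfl⟩, -, hk⟩; exact ⟨k, hk, rfl⟩)
  have hsub : τ '' Icc a (a + m) ⊆ Set.range τ ∩ Ioc s t := by
    rintro _ ⟨k, ⟨hak, hkm⟩, rfl⟩
    exact ⟨⟨k, rfl⟩, hs.trans_le (hτ.1.monotone hak), (hτ.1.monotone hkm).trans ht⟩
  calc m + 1 = (τ '' Icc a (a + m)).ncard := by
        rw [ncard_image_of_injective _ hτ.1.injective, ncard_Icc_nat]
        omega
    _ ≤ seqCnt τ s t := ncard_le_ncard hsub hfin

lemma seqCnt_zero_self (hτ : IsImpSeqFun τ) (k : ℕ) : seqCnt τ 0 (τ k) = k + 1 := by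
  have hset : Set.range τ ∩ Ioc 0 (τ k) = τ '' Iic k := by
    ext x
    constructor
    · rintro ⟨⟨j, rfl⟩, -, hj⟩
      exact ⟨j, hτ.1.le_iff_le.1 hj, rfl⟩
    · rintro ⟨j, hj, rfl⟩
      exact ⟨⟨j, rfl⟩, hτ.2.1.trans_le (hτ.1.monotone j.zero_le), hτ.1.monotone hj⟩
  rw [seqCnt, hset, ncard_image_of_injective _ hτ.1.injective, ncard_Iic_nat]

lemma exists_mem_Ioc_of_succ_le (hτ : Tendsto τ atTop atTop) {d s : ℝ}
    (h0 : τ 0 ≤ s + d) (hstep : ∀ k, τ (k + 1) ≤ τ k + d) :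
    ∃ a, s < τ a ∧ τ a ≤ s + d := by
  classical
  have hex : ∃ a, s < τ a := (hτ.eventually_gt_atTop s).exists
  refine ⟨Nat.find hex, Nat.find_spec hex, ?_⟩
  cases ha : Nat.find hex with
  | zero => exact h0
  | succ j =>
    have hprev : τ j ≤ s := not_lt.1 (Nat.find_min hex (by omega))
    linarith [hstep j]

lemma seqMemSdn_of_sub_le_seqCnt (hτ : IsImpSeqFun τ) {ρ : ℝ} {e : ℝ → ℝ}
    (he : e =o[atTop] id)
    (hcnt : ∀ᶠ t in atTop, ∀ s, 0 ≤ s → ρ * t - e t ≤ seqCnt τ s (s + t)) :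
    SeqMemSdn ρ τ := by
  refine ⟨hτ, fun ε hε => ?_⟩
  obtain ⟨T, hT⟩ := eventually_atTop.1
    ((he.def hε).and (hcnt.and (eventually_gt_atTop 0)))
  refine ⟨max T 1, by positivity, fun t ht s hs => ?_⟩
  obtain ⟨he_t, hcnt_t, ht0⟩ := hT t (le_of_max_le_left ht)
  rw [Real.norm_eq_abs, Real.norm_eq_abs, id, abs_of_pos ht0] at he_t
  rw [le_div_iff₀ ht0]
  linarith [le_abs_self (e t), hcnt_t s hs]

lemma not_seqMemSrad_of_tendsto (n : ℕ) {c : ℝ}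
    (h : Tendsto (fun k : ℕ => τ k / c - k) atTop atTop) : ¬ SeqMemSrad n c τ := by
  rintro ⟨hτ, hrad⟩
  obtain ⟨k, hk⟩ := (h.eventually_gt_atTop (n + 1)).exists
  have := hrad 0 (τ k) le_rfl (hτ.2.1.trans_le (hτ.1.monotone k.zero_le)).le
  rw [seqCnt_zero_self hτ, sub_zero] at this
  push_cast at this
  linarith

end ImpulseSequence

lemma harmonic_add_le (a b : ℕ) : harmonic (a + b) ≤ harmonic a + harmonic b := by
  induction b with
  | zero => simp
  | succ b ih =>
    calc harmonic (a + (b + 1)) = harmonic (a + b) + (↑(a + b + 1))⁻¹ := harmonic_succ _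
      _ ≤ harmonic a + harmonic b + (↑(b + 1))⁻¹ := by gcongr; omega
      _ = harmonic a + harmonic (b + 1) := by rw [harmonic_succ, add_assoc]

lemma gammaSeq_eq_add_harmonic (k : ℕ) : gammaSeq k = k + harmonic (k + 1) := by
  rw [gammaSeq, harmonic_eq_sum_Icc,
    ← Finset.insert_Icc_add_one_left_eq_Icc (by omega : 1 ≤ k + 1), Finset.sum_insert (by simp)]
  push_cast
  simp only [one_div]
  ring

lemma gammaSeq_zero : gammaSeq 0 = 1 := by
  norm_num [gammaSeq]

lemma gammaSeq_succ (k : ℕ) : gammaSeq (k + 1) = gammaSeq k + 1 + ((k : ℝ) + 2)⁻¹ := by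
  rw [gammaSeq_eq_add_harmonic, gammaSeq_eq_add_harmonic, harmonic_succ (k + 1)]
  push_cast
  ring

lemma isImpSeqFun_gammaSeq : IsImpSeqFun gammaSeq := by
  refine ⟨strictMono_nat_of_lt_succ fun k => ?_, by rw [gammaSeq_zero]; exact one_pos, ?_⟩
  · rw [gammaSeq_succ]
    have : (0 : ℝ) < ((k : ℝ) + 2)⁻¹ := by positivity
    linarith
  · refine tendsto_atTop_mono (fun k => ?_) tendsto_natCast_atTop_atTop
    rw [gammaSeq_eq_add_harmonic]
    have : (0 : ℝ) ≤ harmonic (k + 1) := by exact_mod_cast (harmonic_pos k.succ_ne_zero).le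
    linarith

lemma gammaSeq_add_le (a m : ℕ) : gammaSeq (a + m) ≤ gammaSeq a + m + 1 + Real.log m := by
  have hsub : (harmonic (a + 1 + m) : ℝ) ≤ harmonic (a + 1) + harmonic m := by
    exact_mod_cast harmonic_add_le (a + 1) m
  have hlog := harmonic_le_one_add_log m
  rw [gammaSeq_eq_add_harmonic, gammaSeq_eq_add_harmonic, add_right_comm a m 1]
  push_cast
  linarith

lemma exists_gammaSeq_mem_Ioc {s : ℝ} (hs : 0 ≤ s) :
    ∃ a, s < gammaSeq a ∧ gammaSeq a ≤ s + 2 := by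
  refine exists_mem_Ioc_of_succ_le isImpSeqFun_gammaSeq.2.2 (by linarith [gammaSeq_zero])
    fun k => ?_
  have : ((k : ℝ) + 2)⁻¹ ≤ 1 :=
    inv_le_one_of_one_le₀ (by linarith [k.cast_nonneg (α := ℝ)])
  rw [gammaSeq_succ]
  linarith

lemma add_one_le_seqCnt_gammaSeq {s t : ℝ} {m : ℕ} (hs : 0 ≤ s) (ht : 1 ≤ t)
    (hm : (m : ℝ) ≤ t - 3 - Real.log t) : m + 1 ≤ seqCnt gammaSeq s (s + t) := by
  obtain ⟨a, hsa, has⟩ := exists_gammaSeq_mem_Ioc hs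
  have hlog_t := Real.log_nonneg ht
  have hlog_m : Real.log m ≤ Real.log t := by
    rcases m.eq_zero_or_pos with rfl | hm0
    · simpa using hlog_t
    · exact Real.log_le_log (by exact_mod_cast hm0) (by linarith)
  refine add_one_le_seqCnt isImpSeqFun_gammaSeq hsa ?_
  linarith [gammaSeq_add_le a m]

lemma sub_le_seqCnt_gammaSeq {s t : ℝ} (hs : 0 ≤ s) (ht : 1 ≤ t) :
    t - (3 + Real.log t) ≤ seqCnt gammaSeq s (s + t) := by
  rcases lt_or_ge (t - 3 - Real.log t) 0 with hneg | hnonneg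
  · linarith [(seqCnt gammaSeq s (s + t)).cast_nonneg (α := ℝ)]
  · have hcnt : (⌊t - 3 - Real.log t⌋₊ + 1 : ℝ) ≤ seqCnt gammaSeq s (s + t) := by
      exact_mod_cast add_one_le_seqCnt_gammaSeq hs ht (Nat.floor_le hnonneg)
    linarith [Nat.lt_floor_add_one (t - 3 - Real.log t)]

lemma tendsto_gammaSeq_sub_atTop : Tendsto (fun k : ℕ => gammaSeq k - k) atTop atTop := by
  have hlog : Tendsto (fun k : ℕ => Real.log ((k + 1 + 1 : ℕ) : ℝ)) atTop atTop :=
    Real.tendsto_log_atTop.comp (tendsto_natCast_atTop_atTop.comp (tendsto_add_atTop_nat 2))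
  refine tendsto_atTop_mono (fun k => ?_) hlog
  rw [gammaSeq_eq_add_harmonic, add_sub_cancel_left]
  exact log_add_one_le_harmonic (k + 1)

/-- `γ = {τ_k}` with `τ_1 = 1`, `τ_k = k + Σ_{ℓ=2}^k 1/ℓ` is an impulse-time sequence,
belongs to `Sdn(1)`, but does not belong to `Srad(n,1)` for any `n ∈ ℕ`. -/
theorem gammaSeq_mem_sdn_not_srad :
    IsImpSeqFun gammaSeq ∧ SeqMemSdn 1 gammaSeq ∧
    ∀ n : ℕ, ¬ SeqMemSrad n 1 gammaSeq := by
  refine ⟨isImpSeqFun_gammaSeq, seqMemSdn_of_sub_le_seqCnt isImpSeqFun_gammaSeq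
    ((isLittleO_const_id_atTop 3).add Real.isLittleO_log_id_atTop) ?_, fun n => ?_⟩
  · filter_upwards [eventually_ge_atTop 1] with t ht s hs
    simpa only [one_mul] using sub_le_seqCnt_gammaSeq hs ht
  · refine not_seqMemSrad_of_tendsto n ?_
    simpa only [div_one] using tendsto_gammaSeq_sub_atTop
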